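/- arXiv:2004.08035 — 5 statements merged into one kernel-verified Lean document; each statement's English description precedes it below -/
import Mathlib

section
/- Maximal leakage upper bounds mutual information: for any joint distribution of discrete random variables X and Y with conditional distribution p(y|x), the mutual information I(X;Y) = Σ_{x,y} p(x)p(y|x) log( p(y|x) / Σ_{x'} p(x')p(y|x') ) is at most log Σ_y max_{x : p(x)>0} p(y|x). -/
/-!
Bounding `p(y|x)` by `M(y) = max_{x : p(x) > 0} p(y|x)` inside the logarithm can only increase
each term of `I(X;Y)`, which leaves `∑_y q(y) log (M(y) / q(y))` with `q` the law of `Y`.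
By Jensen's inequality for the concave `log`, this is at most `log ∑_y M(y)`.
-/

open Finset Real

lemma mul_le_mul_of_nonneg_of_pos_imp_le {p a b : ℝ} (hp : 0 ≤ p) (h : 0 < p → a ≤ b) :
    p * a ≤ p * b := by
  rcases hp.eq_or_lt with rfl | hp
  · simp
  · exact mul_le_mul_of_nonneg_left (h hp) hp.le

lemma sum_mul_le_sum_mul_of_pos_imp_le {ι : Type*} (s : Finset ι) {p f g : ι → ℝ}
    (hp : ∀ i ∈ s, 0 ≤ p i) (h : ∀ i ∈ s, 0 < p i → f i ≤ g i) :
    ∑ i ∈ s, p i * f i ≤ ∑ i ∈ s, p i * g i :=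
  sum_le_sum fun i hi => mul_le_mul_of_nonneg_of_pos_imp_le (hp i hi) (h i hi)

lemma mul_log_div_le_mul_log_div {w b q : ℝ} (hw : 0 ≤ w) (hwb : w ≤ b) (hq : 0 ≤ q) :
    w * log (w / q) ≤ w * log (b / q) := by
  refine mul_le_mul_of_nonneg_of_pos_imp_le hw fun hw => ?_
  rcases hq.eq_or_lt with rfl | hq
  · simp
  · exact log_le_log (div_pos hw hq) (div_le_div_of_nonneg_right hwb hq.le)

theorem sum_mul_log_div_le_log_sum {ι : Type*} [Fintype ι] {q m : ι → ℝ}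
    (hq : ∀ i, 0 ≤ q i) (hq1 : ∑ i, q i = 1) (hm : ∀ i, 0 ≤ m i)
    (hqm : ∀ i, 0 < q i → 0 < m i) :
    ∑ i, q i * log (m i / q i) ≤ log (∑ i, m i) := by
  set T := univ.filter fun i => 0 < q i
  have hT : ∀ i ∈ T, 0 < q i := fun i hi => (mem_filter.1 hi).2
  have restrict {f : ι → ℝ} : ∑ i ∈ T, q i * f i = ∑ i, q i * f i :=
    sum_filter_of_ne fun i _ hi => (hq i).lt_of_ne' (left_ne_zero_of_mul hi)
  have hT1 : ∑ i ∈ T, q i = 1 := by simpa [hq1] using restrict (f := fun _ => 1)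
  obtain ⟨j, hj⟩ : T.Nonempty := nonempty_of_sum_ne_zero (hT1.symm ▸ one_ne_zero)
  calc ∑ i, q i * log (m i / q i) = ∑ i ∈ T, q i • log (m i / q i) := restrict.symm
    _ ≤ log (∑ i ∈ T, q i • (m i / q i)) :=
      strictConcaveOn_log_Ioi.concaveOn.le_map_sum (fun i hi => (hT i hi).le) hT1
        fun i hi => div_pos (hqm i (hT i hi)) (hT i hi)
    _ = log (∑ i ∈ T, m i) := by
      refine congrArg log (sum_congr rfl fun i hi => ?_)
      rw [smul_eq_mul, mul_div_cancel₀ _ (hT i hi).ne']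
    _ ≤ log (∑ i, m i) :=
      log_le_log (sum_pos (fun i hi => hqm i (hT i hi)) ⟨j, hj⟩)
        (sum_le_sum_of_subset_of_nonneg (subset_univ T) fun i _ _ => hm i)

theorem mutualInformation_le_maximalLeakage_general {X Y : Type*} [Fintype X] [Fintype Y]
    (pX : X → ℝ) (hpX : ∀ x, 0 ≤ pX x) (hpX1 : ∑ x, pX x = 1)
    (W : X → Y → ℝ) (hW : ∀ x y, 0 ≤ W x y) (hWrow : ∀ x, ∑ y, W x y = 1)
    (hsupp : (univ.filter fun x : X => 0 < pX x).Nonempty) :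
    ∑ x, ∑ y, pX x * W x y * Real.log (W x y / ∑ x', pX x' * W x' y) ≤
      Real.log (∑ y, (univ.filter fun x : X => 0 < pX x).sup' hsupp fun x => W x y) := by
  set q : Y → ℝ := fun y => ∑ x, pX x * W x y
  set M : Y → ℝ := fun y => (univ.filter fun x : X => 0 < pX x).sup' hsupp fun x => W x y
  have hWM (x : X) (y : Y) (hx : 0 < pX x) : W x y ≤ M y :=
    le_sup' (fun x => W x y) (mem_filter.2 ⟨mem_univ x, hx⟩)
  have hq (y : Y) : 0 ≤ q y := sum_nonneg fun x _ => mul_nonneg (hpX x) (hW x y)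
  have hq1 : ∑ y, q y = 1 := by
    simp only [q]
    rw [sum_comm]
    simp_rw [← mul_sum, hWrow, mul_one, hpX1]
  have hqM (y : Y) : q y ≤ M y :=
    calc q y ≤ ∑ x, pX x * M y :=
          sum_mul_le_sum_mul_of_pos_imp_le _ (fun x _ => hpX x) fun x _ => hWM x y
      _ = M y := by rw [← sum_mul, hpX1, one_mul]
  calc ∑ x, ∑ y, pX x * W x y * log (W x y / q y)
      = ∑ y, ∑ x, pX x * (W x y * log (W x y / q y)) := by
        rw [sum_comm]; simp_rw [mul_assoc]
    _ ≤ ∑ y, ∑ x, pX x * (W x y * log (M y / q y)) :=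
        sum_le_sum fun y _ => sum_mul_le_sum_mul_of_pos_imp_le _ (fun x _ => hpX x)
          fun x _ hx => mul_log_div_le_mul_log_div (hW x y) (hWM x y hx) (hq y)
    _ = ∑ y, q y * log (M y / q y) := by simp_rw [← mul_assoc, ← sum_mul]; rfl
    _ ≤ log (∑ y, M y) :=
        sum_mul_log_div_le_log_sum hq hq1 (fun y => (hq y).trans (hqM y))
          fun y hy => hy.trans_le (hqM y)

/-- Maximal leakage upper bounds mutual information:
`I(X;Y) ≤ log Σ_y max_{x : p(x)>0} p(y|x)`. -/
theorem mutualInformation_le_maximalLeakage {X Y : Type*} [Fintype X] [Fintype Y]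
    [Nonempty X] [Nonempty Y]
    (pX : X → ℝ) (hpX : ∀ x, 0 ≤ pX x) (hpX1 : ∑ x, pX x = 1)
    (W : X → Y → ℝ) (hW : ∀ x y, 0 ≤ W x y) (hWrow : ∀ x, ∑ y, W x y = 1)
    (hsupp : (univ.filter fun x : X => 0 < pX x).Nonempty) :
    ∑ x, ∑ y, pX x * W x y * Real.log (W x y / ∑ x', pX x' * W x' y) ≤
      Real.log (∑ y, (univ.filter fun x : X => 0 < pX x).sup' hsupp fun x => W x y) :=
  mutualInformation_le_maximalLeakage_general pX hpX hpX1 W hW hWrow hsupp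
end

section
/- For the shattering construction, maximal leakage equals mult-leakage: if U is uniform over a finite set 𝒰 and X = g(U) for a deterministic function g : 𝒰 → 𝒳 that is surjective onto 𝒳 and such that every x ∈ 𝒳 has equally many preimages under g within 𝒰, and Y is generated from X by a stochastic matrix P, then the ratio of the optimal informed guessing probability max over guessing functions ũ : 𝒴 → 𝒰 of Pr(U = ũ(Y)) to the optimal blind guessing probability max_u Pr(U = u) = 1/|𝒰| equals Σ_y max_{x∈𝒳} p(y|x). -/
open Finset

/-- For a shattering `U` (uniform on `𝒰`, pushed forward by a surjection `g` with
equal-size fibers onto `𝒳`, followed by the channel `W`), the ratio of the optimal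
informed guessing probability to the optimal blind guessing probability equals the
exponentiated maximal leakage `Σ_y max_x p(y|x)`. -/
theorem maximalLeakage_eq_multLeakage_shattering
    {U X Y : Type*} [Fintype U] [Fintype X] [Fintype Y]
    [Nonempty U] [Nonempty X] [Nonempty Y] [DecidableEq X] [DecidableEq Y]
    (g : U → X) (hg : Function.Surjective g)
    (hfib : ∀ x x' : X, (univ.filter fun u => g u = x).card =
      (univ.filter fun u => g u = x').card)
    (W : X → Y → ℝ) (hW : ∀ x y, 0 ≤ W x y) (hWrow : ∀ x, ∑ y, W x y = 1) :
    (univ.sup' univ_nonempty fun guess : Y → U =>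
        ∑ y, (1 / (Fintype.card U : ℝ)) * W (g (guess y)) y) /
      (1 / (Fintype.card U : ℝ)) =
    ∑ y, univ.sup' univ_nonempty fun x => W x y := by
  have hN : (0:ℝ) < (Fintype.card U : ℝ) := by
    exact_mod_cast Fintype.card_pos
  have key : (univ.sup' univ_nonempty fun guess : Y → U =>
        ∑ y, (1 / (Fintype.card U : ℝ)) * W (g (guess y)) y) =
      (1 / (Fintype.card U : ℝ)) * ∑ y, univ.sup' univ_nonempty fun x => W x y := by
    apply le_antisymm
    · apply Finset.sup'_le
      intro guess _
      rw [Finset.mul_sum]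
      apply Finset.sum_le_sum
      intro y _
      have h1 : W (g (guess y)) y ≤ univ.sup' univ_nonempty fun x => W x y :=
        Finset.le_sup' (fun x => W x y) (mem_univ _)
      have h2 : (0:ℝ) ≤ 1 / (Fintype.card U : ℝ) := by positivity
      exact mul_le_mul_of_nonneg_left h1 h2
    · have hx : ∀ y : Y, ∃ x ∈ (univ : Finset X),
          (univ.sup' univ_nonempty fun x => W x y) = W x y :=
        fun y => Finset.exists_mem_eq_sup' univ_nonempty _
      choose xm _ hxm using hx
      choose um hum using fun y => hg (xm y)
      calc (1 / (Fintype.card U : ℝ)) * ∑ y, (univ.sup' univ_nonempty fun x => W x y)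
          = ∑ y, (1 / (Fintype.card U : ℝ)) * W (g (um y)) y := by
            rw [Finset.mul_sum]
            refine Finset.sum_congr rfl fun y _ => ?_
            rw [hxm y, hum y]
        _ ≤ _ := Finset.le_sup' (fun guess : Y → U =>
            ∑ y, (1 / (Fintype.card U : ℝ)) * W (g (guess y)) y) (mem_univ um)
  rw [key]
  field_simp
end

section
/- For any Markov chain U − X − Y with finite alphabets, the maximum probability of correctly guessing U from Y satisfies max_{ũ} Pr(U = ũ(Y)) ≤ (max_u Pr(U = u)) · Σ_y max_{x : p(x)>0} p(y|x). Consequently the multiplicative gain leakage is upper bounded by maximal leakage. -/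
open Finset

/-!
Since `q u x = 0` whenever `x` lies off the support of `X`, for each `y` the weight
`Σ_x q u x W x y` is at most `Pr(U = u) · max_{x ∈ supp} W x y`. Summing over `y` with `u = guess y`
bounds every guess by `max_u Pr(U = u) · Σ_y max_{x ∈ supp} W x y`.
-/

theorem Finset.sum_mul_le_sum_mul_sup' {ι R : Type*} [Fintype ι] [Semiring R] [LinearOrder R]
    [IsOrderedRing R] {a f : ι → R} {s : Finset ι} (hs : s.Nonempty) (ha : ∀ i, 0 ≤ a i)
    (ha_supp : ∀ i ∉ s, a i = 0) :
    ∑ i, a i * f i ≤ (∑ i, a i) * s.sup' hs f := by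
  rw [sum_mul]
  refine sum_le_sum fun i _ => ?_
  by_cases hi : i ∈ s
  · exact mul_le_mul_of_nonneg_left (le_sup' f hi) (ha i)
  · simp [ha_supp i hi]

theorem multLeakage_le_maximalLeakage_general
    {U X Y : Type*} [Fintype U] [Fintype X] [Fintype Y]
    [Nonempty U] [DecidableEq Y]
    (q : U → X → ℝ) (hq : ∀ u x, 0 ≤ q u x)
    (W : X → Y → ℝ) (hW : ∀ x y, 0 ≤ W x y)
    (hsupp : (univ.filter fun x : X => 0 < ∑ u, q u x).Nonempty) :
    (univ.sup' univ_nonempty fun guess : Y → U =>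
        ∑ y, ∑ x, q (guess y) x * W x y) ≤
      (univ.sup' univ_nonempty fun u : U => ∑ x, q u x) *
        ∑ y, (univ.filter fun x : X => 0 < ∑ u, q u x).sup' hsupp fun x => W x y := by
  set S := univ.filter fun x : X => 0 < ∑ u, q u x
  have hq_supp : ∀ u, ∀ x ∉ S, q u x = 0 := fun u x hx =>
    (sum_eq_zero_iff_of_nonneg fun u _ => hq u x).mp
      (le_antisymm (not_lt.mp (by simpa [S] using hx)) (sum_nonneg fun u _ => hq u x)) u (mem_univ u)
  have hmax_nonneg : ∀ y, 0 ≤ S.sup' hsupp fun x => W x y := fun y =>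
    (hW _ y).trans (le_sup' (fun x => W x y) hsupp.choose_spec)
  refine sup'_le _ _ fun guess _ => ?_
  calc ∑ y, ∑ x, q (guess y) x * W x y
      ≤ ∑ y, (∑ x, q (guess y) x) * S.sup' hsupp fun x => W x y :=
        sum_le_sum fun y _ => sum_mul_le_sum_mul_sup' hsupp (hq _) (hq_supp _)
    _ ≤ ∑ y, (univ.sup' univ_nonempty fun u : U => ∑ x, q u x) * S.sup' hsupp fun x => W x y :=
        sum_le_sum fun y _ => mul_le_mul_of_nonneg_right
          (le_sup' (fun u : U => ∑ x, q u x) (mem_univ _)) (hmax_nonneg y)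
    _ = _ := (mul_sum ..).symm

/-- For a Markov chain `U − X − Y` (joint pmf `q` on `U × X`, channel `W : X → Y`),
the maximum probability of correctly guessing `U` from `Y` is at most
`(max_u Pr(U=u)) · Σ_y max_{x : p(x)>0} p(y|x)`; hence the multiplicative gain
leakage is upper bounded by maximal leakage. -/
theorem multLeakage_le_maximalLeakage
    {U X Y : Type*} [Fintype U] [Fintype X] [Fintype Y]
    [Nonempty U] [Nonempty X] [Nonempty Y] [DecidableEq U] [DecidableEq Y]
    (q : U → X → ℝ) (hq : ∀ u x, 0 ≤ q u x) (hq1 : ∑ u, ∑ x, q u x = 1)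
    (W : X → Y → ℝ) (hW : ∀ x y, 0 ≤ W x y) (hWrow : ∀ x, ∑ y, W x y = 1)
    (hsupp : (univ.filter fun x : X => 0 < ∑ u, q u x).Nonempty) :
    (univ.sup' univ_nonempty fun guess : Y → U =>
        ∑ y, ∑ x, q (guess y) x * W x y) ≤
      (univ.sup' univ_nonempty fun u : U => ∑ x, q u x) *
        ∑ y, (univ.filter fun x : X => 0 < ∑ u, q u x).sup' hsupp fun x => W x y :=
  multLeakage_le_maximalLeakage_general q hq W hW hsupp
end

section
/- Adding independent noise cannot increase maximal leakage: if Y is generated from X by stochastic matrix P and Z is generated from Y by stochastic matrix Q independently of X given Y, then the exponentiated maximal leakage of the composed channel QP (from X to Z) is at most that of P, i.e., Σ_z max_x (Σ_y p_{xy} q_{yz}) ≤ Σ_y max_x p_{xy}. -/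
/-!
Bounding each entry `p_{xy}` by its column maximum `m_y := max_x p_{xy}` gives
`max_x Σ_y p_{xy} q_{yz} ≤ Σ_y m_y q_{yz}` for every `z`, since `q_{yz} ≥ 0`. Summing over `z`
and using that the rows of `Q` sum to one leaves `Σ_y m_y`.
-/

open Finset

theorem Finset.sup'_sum_mul_le {ι κ R : Type*} [Semiring R] [LinearOrder R] [IsOrderedRing R]
    (s : Finset ι) (hs : s.Nonempty) (t : Finset κ)
    (f : ι → κ → R) (g : κ → R) (hg : ∀ y ∈ t, 0 ≤ g y) :
    s.sup' hs (fun x => ∑ y ∈ t, f x y * g y) ≤ ∑ y ∈ t, s.sup' hs (f · y) * g y :=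
  sup'_le hs _ fun _ hx =>
    sum_le_sum fun y hy => mul_le_mul_of_nonneg_right (le_sup' (f · y) hx) (hg y hy)

theorem Finset.sum_sum_mul_of_sum_eq_one {ι κ R : Type*} [NonAssocSemiring R]
    [Fintype ι] [Fintype κ] (a : ι → R) (Q : ι → κ → R)
    (hQ : ∀ y, ∑ z, Q y z = 1) :
    ∑ z, ∑ y, a y * Q y z = ∑ y, a y := by
  rw [sum_comm]
  simp only [← mul_sum, hQ, mul_one]

theorem expMaxLeakage_postprocessing_general {X Y Z : Type*}
    [Fintype X] [Fintype Y] [Fintype Z] [Nonempty X]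
    (P : X → Y → ℝ)
    (Q : Y → Z → ℝ) (hQnn : ∀ y z, 0 ≤ Q y z) (hQrow : ∀ y, ∑ z, Q y z = 1) :
    ∑ z, univ.sup' univ_nonempty (fun x => ∑ y, P x y * Q y z) ≤
      ∑ y, univ.sup' univ_nonempty (fun x => P x y) :=
  calc ∑ z, univ.sup' univ_nonempty (fun x => ∑ y, P x y * Q y z)
      ≤ ∑ z, ∑ y, univ.sup' univ_nonempty (fun x => P x y) * Q y z :=
        sum_le_sum fun z _ => sup'_sum_mul_le _ _ _ P (Q · z) fun y _ => hQnn y z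
    _ = ∑ y, univ.sup' univ_nonempty (fun x => P x y) := sum_sum_mul_of_sum_eq_one _ Q hQrow

/-- Post-processing by independent noise cannot increase maximal leakage:
`Σ_z max_x Σ_y p_{xy} q_{yz} ≤ Σ_y max_x p_{xy}`. -/
theorem expMaxLeakage_postprocessing {X Y Z : Type*}
    [Fintype X] [Fintype Y] [Fintype Z] [Nonempty X] [Nonempty Y] [Nonempty Z]
    (P : X → Y → ℝ) (hPnn : ∀ x y, 0 ≤ P x y) (hProw : ∀ x, ∑ y, P x y = 1)
    (Q : Y → Z → ℝ) (hQnn : ∀ y z, 0 ≤ Q y z) (hQrow : ∀ y, ∑ z, Q y z = 1) :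
    ∑ z, univ.sup' univ_nonempty (fun x => ∑ y, P x y * Q y z) ≤
      ∑ y, univ.sup' univ_nonempty (fun x => P x y) :=
  expMaxLeakage_postprocessing_general P Q hQnn hQrow
end

section
/- Water-filling preserves column maxima and does not increase exp-leak: given a stochastic M×N matrix P with column-maximum vector p_i = max_x p_{x,y_i}, the water-filled matrix P' constructed by setting, for each row x and columns left to right, p'_{x,y_i} = min{p_i, 1 − Σ_{j<i} p'_{x,y_j}} (when c(x,y_i) < ∞, else 0), is itself a stochastic matrix with Σ_y max_x p'_{xy} ≤ Σ_y max_x p_{xy}, provided the cost function is staircase nondecreasing. -/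
/-!
Each row of `P'` is filled greedily, so the partial row sums never exceed `1` and grow
monotonically, and every entry of `P'` is at most the corresponding column maximum of `P`;
this gives the leakage bound at once. If some row of `P'` stopped short of total mass `1`,
the cap `1 - Σ_{j<i} p'_{x,y_j}` would never have been active in that row, so each finite-cost
entry equals the column maximum and hence dominates `p_{x,y}`; as infinite-cost entries of `P`
vanish, the row of `P'` would carry at least the mass `1` of the row of `P`.
-/

open Finset
open scoped ENNReal

/-- Partial row sums of the water-filled matrix: `wfSum P c x n` is the total mass
placed in the first `n` columns of row `x` by the water-filling procedure, which fills
each row left to right up to the column maxima of `P`, skipping infinite-cost entries. -/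
noncomputable def wfSum {M N : ℕ} (P : Fin (M + 1) → Fin (N + 1) → ℝ)
    (c : Fin (M + 1) → Fin (N + 1) → ℝ≥0∞) (x : Fin (M + 1)) : ℕ → ℝ
  | 0 => 0
  | n + 1 =>
    if h : n < N + 1 then
      if c x ⟨n, h⟩ = ⊤ then wfSum P c x n
      else wfSum P c x n +
        min (univ.sup' univ_nonempty fun x' => P x' ⟨n, h⟩) (1 - wfSum P c x n)
    else wfSum P c x n

/-- The water-filled matrix `P'` associated to `P` and the cost function `c`. -/
noncomputable def waterfill {M N : ℕ} (P : Fin (M + 1) → Fin (N + 1) → ℝ)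
    (c : Fin (M + 1) → Fin (N + 1) → ℝ≥0∞) (x : Fin (M + 1)) (i : Fin (N + 1)) : ℝ :=
  wfSum P c x (i.val + 1) - wfSum P c x i.val

section

variable {ι κ : Type*} [Fintype ι] [Nonempty ι]

noncomputable def colMax (P : ι → κ → ℝ) (y : κ) : ℝ :=
  univ.sup' univ_nonempty fun x => P x y

lemma le_colMax (P : ι → κ → ℝ) (x : ι) (y : κ) : P x y ≤ colMax P y :=
  le_sup' (fun x => P x y) (mem_univ x)

lemma colMax_nonneg {P : ι → κ → ℝ} (hP : ∀ x y, 0 ≤ P x y) (y : κ) : 0 ≤ colMax P y :=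
  (hP (Classical.arbitrary ι) y).trans (le_colMax P _ y)

end

variable {M N : ℕ} (P : Fin (M + 1) → Fin (N + 1) → ℝ) (c : Fin (M + 1) → Fin (N + 1) → ℝ≥0∞)
  (x : Fin (M + 1))

lemma wfSum_fin_succ (i : Fin (N + 1)) :
    wfSum P c x (i.val + 1) =
      if c x i = ⊤ then wfSum P c x i
      else wfSum P c x i + min (colMax P i) (1 - wfSum P c x i) := by
  rw [wfSum, dif_pos i.isLt]
  rfl

lemma waterfill_eq (i : Fin (N + 1)) :
    waterfill P c x i = if c x i = ⊤ then 0 else min (colMax P i) (1 - wfSum P c x i) := by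
  rw [waterfill, wfSum_fin_succ]
  split_ifs <;> ring

lemma wfSum_le_one : ∀ n, wfSum P c x n ≤ 1
  | 0 => zero_le_one
  | n + 1 => by
    have ih := wfSum_le_one n
    rw [wfSum]
    split_ifs
    · exact ih
    · exact add_le_of_le_sub_left (min_le_right _ _)
    · exact ih

lemma wfSum_monotone {P} (hP : ∀ x y, 0 ≤ P x y) : Monotone (wfSum P c x) := by
  refine monotone_nat_of_le_succ fun n => ?_
  rw [wfSum]
  split_ifs with hn
  · exact le_rfl
  · have hcap : 0 ≤ min (colMax P (⟨n, hn⟩ : Fin (N + 1))) (1 - wfSum P c x n) :=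
      le_min (colMax_nonneg hP _) (sub_nonneg.2 (wfSum_le_one P c x n))
    exact le_add_of_nonneg_right hcap
  · exact le_rfl

lemma waterfill_nonneg {P} (hP : ∀ x y, 0 ≤ P x y) (i : Fin (N + 1)) :
    0 ≤ waterfill P c x i :=
  sub_nonneg.2 (wfSum_monotone c x hP (Nat.le_succ _))

lemma waterfill_le_colMax {P} (hP : ∀ x y, 0 ≤ P x y) (i : Fin (N + 1)) :
    waterfill P c x i ≤ colMax P i := by
  rw [waterfill_eq]
  split_ifs
  · exact colMax_nonneg hP i
  · exact min_le_left _ _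

lemma sum_waterfill : ∑ i, waterfill P c x i = wfSum P c x (N + 1) := by
  refine (Fin.sum_univ_eq_sum_range (fun i => wfSum P c x (i + 1) - wfSum P c x i) _).trans ?_
  rw [sum_range_sub]
  exact sub_zero _

lemma waterfill_eq_colMax_of_wfSum_lt_one {P} (hP : ∀ x y, 0 ≤ P x y)
    (hx : wfSum P c x (N + 1) < 1) {i : Fin (N + 1)} (hi : c x i ≠ ⊤) :
    waterfill P c x i = colMax P i := by
  have hlt : waterfill P c x i < 1 - wfSum P c x i := by
    have := wfSum_monotone c x hP (Nat.succ_le_of_lt i.isLt)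
    rw [waterfill]
    linarith
  rw [waterfill_eq, if_neg hi] at hlt ⊢
  exact min_eq_left (min_lt_iff.1 hlt |>.resolve_right (lt_irrefl _)).le

lemma sum_waterfill_eq_one {P} (hP : ∀ x y, 0 ≤ P x y) (hrow : ∑ y, P x y = 1)
    (hfin : ∀ y, c x y = ⊤ → P x y = 0) : ∑ i, waterfill P c x i = 1 := by
  rw [sum_waterfill]
  by_contra hne
  have hx := (wfSum_le_one P c x (N + 1)).lt_of_ne hne
  have hdom : ∀ i, P x i ≤ waterfill P c x i := fun i => by
    by_cases hi : c x i = ⊤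
    · exact (hfin i hi).le.trans (waterfill_nonneg c x hP i)
    · exact (waterfill_eq_colMax_of_wfSum_lt_one c x hP hx hi).symm ▸ le_colMax P x i
  have := sum_le_sum fun i (_ : i ∈ univ) => hdom i
  rw [hrow, sum_waterfill] at this
  linarith

theorem waterfill_stochastic_and_leakage_le_general {M N : ℕ}
    (P : Fin (M + 1) → Fin (N + 1) → ℝ)
    (c : Fin (M + 1) → Fin (N + 1) → ℝ≥0∞)
    (hPnn : ∀ x y, 0 ≤ P x y) (hProw : ∀ x, ∑ y, P x y = 1)
    (hfin : ∀ x y, c x y = ⊤ → P x y = 0) :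
    (∀ x y, 0 ≤ waterfill P c x y) ∧
    (∀ x, ∑ y, waterfill P c x y = 1) ∧
    ∑ y, univ.sup' univ_nonempty (fun x => waterfill P c x y) ≤
      ∑ y, univ.sup' univ_nonempty (fun x => P x y) :=
  ⟨fun x => waterfill_nonneg c x hPnn,
    fun x => sum_waterfill_eq_one c x hPnn (hProw x) (hfin x),
    sum_le_sum fun y _ => sup'_le _ _ fun x _ => waterfill_le_colMax c x hPnn y⟩

/-- Water-filling yields a stochastic matrix and does not increase the exponentiated
maximal leakage, provided the cost function is staircase nondecreasing and `P` is a
stochastic matrix of finite total cost. -/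
theorem waterfill_stochastic_and_leakage_le {M N : ℕ}
    (P : Fin (M + 1) → Fin (N + 1) → ℝ)
    (c : Fin (M + 1) → Fin (N + 1) → ℝ≥0∞)
    (hPnn : ∀ x y, 0 ≤ P x y) (hProw : ∀ x, ∑ y, P x y = 1)
    (hfin : ∀ x y, c x y = ⊤ → P x y = 0)
    (hstair₁ : ∀ i j : Fin (M + 1), i < j → ∀ y, c i y = ⊤ → c j y = ⊤)
    (hstair₂ : ∀ x, ∀ i j : Fin (N + 1), i < j → c x i ≠ ⊤ →
      c x i ≤ c x j ∧ c x j ≠ ⊤) :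
    (∀ x y, 0 ≤ waterfill P c x y) ∧
    (∀ x, ∑ y, waterfill P c x y = 1) ∧
    ∑ y, univ.sup' univ_nonempty (fun x => waterfill P c x y) ≤
      ∑ y, univ.sup' univ_nonempty (fun x => P x y) :=
  waterfill_stochastic_and_leakage_le_general P c hPnn hProw hfin
end
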